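/- Let ρ̃ : ℝ² × ℝ → ℝ, u : ℝ² × ℝ → ℝ² and F : ℝ² × ℝ → M₂(ℝ) be differentiable functions satisfying at every point the equations ∂ₜρ̃ + u·∇ρ̃ = 0 and ∂ₜF + u·∇F = (∇u)F. Define the effective tensor G := ρ̃ F Fᵀ − I, where I is the 2×2 identity matrix. Then at every point one has ∂ₜG + u·∇G + Q(∇u, G) = 2 D(u), where Q(∇u, G) := −(∇u)G − G(∇u)ᵀ and D(u) := (∇u + (∇u)ᵀ)/2. -/

import Mathlib

/-! The material derivative `D = ∂ₜ + u·∇` obeys the Leibniz rule, so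
`D(ρ̃FFᵀ) = (Dρ̃)FFᵀ + ρ̃(DF)Fᵀ + ρ̃F(DF)ᵀ = ∇u (ρ̃FFᵀ) + (ρ̃FFᵀ) ∇uᵀ`.
Substituting `ρ̃FFᵀ = G + I` turns the right-hand side into `∇u G + G ∇uᵀ + ∇u + ∇uᵀ`,
i.e. `−Q(∇u, G) + 2D(u)`. -/

open Matrix

noncomputable section

/-- The plane `ℝ²`. -/
abbrev E2 : Type := EuclideanSpace ℝ (Fin 2)

/-- `i`-th standard basis vector of `ℝ²`. -/
def e2 (i : Fin 2) : E2 := EuclideanSpace.single i (1 : ℝ)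

/-- spatial partial derivative `∂ᵢ f` of a scalar function on `ℝ²`. -/
def pd (f : E2 → ℝ) (x : E2) (i : Fin 2) : ℝ := fderiv ℝ f x (e2 i)

/-- the spatial gradient matrix `(∇u)_{ij} = ∂_j u_i` of a (time-dependent) velocity
field `u`. -/
def gradM (u : E2 → ℝ → Fin 2 → ℝ) (x : E2) (t : ℝ) : Matrix (Fin 2) (Fin 2) ℝ :=
  fun i j => pd (fun y => u y t i) x j

/-- `Q(A, G) = −AG − GAᵀ`. -/
def Qm (A G : Matrix (Fin 2) (Fin 2) ℝ) : Matrix (Fin 2) (Fin 2) ℝ := -(A * G) - G * Aᵀ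

/-- `D(A) = (A + Aᵀ)/2`, the symmetric part. -/
def Dm (A : Matrix (Fin 2) (Fin 2) ℝ) : Matrix (Fin 2) (Fin 2) ℝ := (2 : ℝ)⁻¹ • (A + Aᵀ)

/-- The effective tensor `G := ρ̃FFᵀ − I`. -/
def Gm (ρ : E2 → ℝ → ℝ) (F : E2 → ℝ → Matrix (Fin 2) (Fin 2) ℝ) (x : E2) (t : ℝ) :
    Matrix (Fin 2) (Fin 2) ℝ :=
  ρ x t • (F x t * (F x t)ᵀ) - 1

section Slices

variable {𝕜 E F G : Type*} [NontriviallyNormedField 𝕜]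
  [NormedAddCommGroup E] [NormedSpace 𝕜 E] [NormedAddCommGroup F] [NormedSpace 𝕜 F]
  [NormedAddCommGroup G] [NormedSpace 𝕜 G] {f : E → F → G}

theorem Differentiable.differentiableAt_uncurry_right
    (hf : Differentiable 𝕜 (Function.uncurry f)) (x : E) (t : F) : DifferentiableAt 𝕜 (f x) t :=
  (hf (x, t)).comp t ((differentiableAt_const x).prodMk differentiableAt_id)

theorem Differentiable.differentiableAt_uncurry_left
    (hf : Differentiable 𝕜 (Function.uncurry f)) (x : E) (t : F) :
    DifferentiableAt 𝕜 (fun y => f y t) x :=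
  (hf (x, t)).comp (f := fun y => (y, t)) x
    (differentiableAt_id.prodMk (differentiableAt_const t))

end Slices

def materialDeriv (u : E2 → ℝ → Fin 2 → ℝ) (f : E2 → ℝ → ℝ) (x : E2) (t : ℝ) : ℝ :=
  deriv (f x) t + ∑ k, u x t k * pd (fun y => f y t) x k

namespace materialDeriv

variable (u : E2 → ℝ → Fin 2 → ℝ) (x : E2) (t : ℝ)

theorem sub_const (f : E2 → ℝ → ℝ) (c : ℝ) :
    materialDeriv u (fun y s => f y s - c) x t = materialDeriv u f x t := by
  simp only [materialDeriv, pd, deriv_sub_const, fderiv_sub_const]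

theorem mul {f g : E2 → ℝ → ℝ} (hf : Differentiable ℝ (Function.uncurry f))
    (hg : Differentiable ℝ (Function.uncurry g)) :
    materialDeriv u (fun y s => f y s * g y s) x t
      = materialDeriv u f x t * g x t + f x t * materialDeriv u g x t := by
  simp only [materialDeriv, pd]
  rw [deriv_fun_mul (hf.differentiableAt_uncurry_right x t)
      (hg.differentiableAt_uncurry_right x t),
    fderiv_fun_mul (hf.differentiableAt_uncurry_left x t) (hg.differentiableAt_uncurry_left x t)]
  simp only [_root_.add_apply, _root_.smul_apply, smul_eq_mul, Fin.sum_univ_two]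
  ring

theorem sum {ι : Type*} [Fintype ι] {f : ι → E2 → ℝ → ℝ}
    (hf : ∀ m, Differentiable ℝ (Function.uncurry (f m))) :
    materialDeriv u (fun y s => ∑ m, f m y s) x t = ∑ m, materialDeriv u (f m) x t := by
  simp only [materialDeriv, pd]
  rw [deriv_fun_sum fun m _ => (hf m).differentiableAt_uncurry_right x t,
    fderiv_fun_sum fun m _ => (hf m).differentiableAt_uncurry_left x t]
  simp only [_root_.sum_apply, Finset.mul_sum, Finset.sum_add_distrib]
  rw [Finset.sum_comm]

end materialDeriv

theorem materialDeriv_mul_transpose {n p : Type*} [Fintype n] [Fintype p]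
    (u : E2 → ℝ → Fin 2 → ℝ) (x : E2) (t : ℝ) {F : E2 → ℝ → Matrix n p ℝ}
    (hF : ∀ i j, Differentiable ℝ (Function.uncurry fun y s => F y s i j)) (A : Matrix n n ℝ)
    (hFeq : ∀ i j, materialDeriv u (fun y s => F y s i j) x t = (A * F x t) i j) (i j : n) :
    materialDeriv u (fun y s => (F y s * (F y s)ᵀ) i j) x t
      = (A * (F x t * (F x t)ᵀ) + F x t * (F x t)ᵀ * Aᵀ) i j := by
  have hAF : A * (F x t * (F x t)ᵀ) + F x t * (F x t)ᵀ * Aᵀ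
      = A * F x t * (F x t)ᵀ + F x t * (A * F x t)ᵀ := by
    rw [transpose_mul, Matrix.mul_assoc, Matrix.mul_assoc]
  rw [hAF, Matrix.add_apply, mul_apply, mul_apply, ← Finset.sum_add_distrib,
    show (fun y s => (F y s * (F y s)ᵀ) i j) = fun y s => ∑ m, F y s i m * F y s j m from rfl,
    materialDeriv.sum u x t (f := fun m y s => F y s i m * F y s j m)
      fun m => (hF i m).fun_mul (hF j m)]
  refine Finset.sum_congr rfl fun m _ => ?_
  rw [materialDeriv.mul u x t (hF i m) (hF j m), hFeq, hFeq, transpose_apply, transpose_apply]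

theorem materialDeriv_Gm (u : E2 → ℝ → Fin 2 → ℝ) (x : E2) (t : ℝ) {ρ : E2 → ℝ → ℝ}
    {F : E2 → ℝ → Matrix (Fin 2) (Fin 2) ℝ} (hρ : Differentiable ℝ (Function.uncurry ρ))
    (hF : ∀ i j, Differentiable ℝ (Function.uncurry fun y s => F y s i j))
    (A : Matrix (Fin 2) (Fin 2) ℝ) (hρeq : materialDeriv u ρ x t = 0)
    (hFeq : ∀ i j, materialDeriv u (fun y s => F y s i j) x t = (A * F x t) i j) (i j : Fin 2) :
    materialDeriv u (fun y s => Gm ρ F y s i j) x t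
      = (ρ x t • (A * (F x t * (F x t)ᵀ) + F x t * (F x t)ᵀ * Aᵀ)) i j := by
  have hFFt : Differentiable ℝ (Function.uncurry fun y s => (F y s * (F y s)ᵀ) i j) := by
    simp only [mul_apply, transpose_apply]
    exact Differentiable.fun_sum fun m _ => (hF i m).fun_mul (hF j m)
  simp only [Gm, Matrix.sub_apply, Matrix.smul_apply, smul_eq_mul]
  rw [materialDeriv.sub_const, materialDeriv.mul u x t hρ hFFt, hρeq,
    materialDeriv_mul_transpose u x t hF A hFeq]
  ring

theorem smul_add_Qm_smul_sub_one (c : ℝ) (A P : Matrix (Fin 2) (Fin 2) ℝ) :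
    c • (A * P + P * Aᵀ) + Qm A (c • P - 1) = (2 : ℝ) • Dm A := by
  simp only [Qm, Dm, smul_smul, mul_inv_cancel₀ (two_ne_zero : (2 : ℝ) ≠ 0), one_smul,
    mul_sub, sub_mul, Matrix.mul_smul, Matrix.smul_mul, Matrix.mul_one, Matrix.one_mul]
  module

theorem stmt1_general
    (ρ : E2 → ℝ → ℝ) (u : E2 → ℝ → Fin 2 → ℝ) (F : E2 → ℝ → Matrix (Fin 2) (Fin 2) ℝ)
    (hρ : Differentiable ℝ (fun q : E2 × ℝ => ρ q.1 q.2))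
    (hF : ∀ i j, Differentiable ℝ (fun q : E2 × ℝ => F q.1 q.2 i j))
    (hρeq : ∀ x t, deriv (fun s => ρ x s) t + ∑ k, u x t k * pd (fun y => ρ y t) x k = 0)
    (hFeq : ∀ x t i j,
      deriv (fun s => F x s i j) t + ∑ k, u x t k * pd (fun y => F y t i j) x k
        = (gradM u x t * F x t) i j) :
    ∀ x t i j,
      deriv (fun s => Gm ρ F x s i j) t
        + ∑ k, u x t k * pd (fun y => Gm ρ F y t i j) x k
        + Qm (gradM u x t) (Gm ρ F x t) i j
      = ((2 : ℝ) • Dm (gradM u x t)) i j := by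
  intro x t i j
  change materialDeriv u (fun y s => Gm ρ F y s i j) x t + _ = _
  rw [materialDeriv_Gm u x t hρ hF _ (hρeq x t) (hFeq x t), ← Matrix.add_apply, Gm,
    smul_add_Qm_smul_sub_one]

/-- If `∂ₜρ̃ + u·∇ρ̃ = 0` and `∂ₜF + u·∇F = (∇u)F`, then the effective tensor
`G = ρ̃FFᵀ − I` satisfies `∂ₜG + u·∇G + Q(∇u, G) = 2D(u)` (entrywise, at every point). -/
theorem stmt1
    (ρ : E2 → ℝ → ℝ) (u : E2 → ℝ → Fin 2 → ℝ) (F : E2 → ℝ → Matrix (Fin 2) (Fin 2) ℝ)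
    (hρ : Differentiable ℝ (fun q : E2 × ℝ => ρ q.1 q.2))
    (hu : ∀ i, Differentiable ℝ (fun q : E2 × ℝ => u q.1 q.2 i))
    (hF : ∀ i j, Differentiable ℝ (fun q : E2 × ℝ => F q.1 q.2 i j))
    (hρeq : ∀ x t, deriv (fun s => ρ x s) t + ∑ k, u x t k * pd (fun y => ρ y t) x k = 0)
    (hFeq : ∀ x t i j,
      deriv (fun s => F x s i j) t + ∑ k, u x t k * pd (fun y => F y t i j) x k
        = (gradM u x t * F x t) i j) :
    ∀ x t i j,
      deriv (fun s => Gm ρ F x s i j) t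
        + ∑ k, u x t k * pd (fun y => Gm ρ F y t i j) x k
        + Qm (gradM u x t) (Gm ρ F x t) i j
      = ((2 : ℝ) • Dm (gradM u x t)) i j :=
  stmt1_general ρ u F hρ hF hρeq hFeq
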